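/- arXiv:2003.06666 — 2 statements merged into one kernel-verified Lean document; each statement's English description precedes it below -/
import Mathlib

section
/- For every real antisymmetric (n+1)×(n+1) matrix F there exist R ∈ SO(n) and real numbers u₀, u₁, …, u_{n−1} such that, writing Λ = diag(1, R) for the block-diagonal matrix acting as the identity on the x⁰ coordinate and as R on the spatial coordinates (x¹,…,xⁿ), one has Λᵀ F Λ = Σ_{k=0}^{n−1} u_k · dx^k dx^{k+1}; that is, the transformed matrix has nonzero entries only in the positions (k, k+1) and (k+1, k). -/
open Matrix BigOperators

noncomputable section

/-- The Minkowski metric `η = diag(−1,1,…,1)` on `ℝ^{n,1}`. -/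
def eta (n : ℕ) : Matrix (Fin (n+1)) (Fin (n+1)) ℝ :=
  Matrix.diagonal (fun i => if (i : ℕ) = 0 then -1 else 1)

/-- `dx^μ dx^ν`: the antisymmetric matrix with `(μ,ν)` entry `+1`,
`(ν,μ)` entry `−1`, all other entries `0`. -/
def dx (n μ ν : ℕ) : Matrix (Fin (n+1)) (Fin (n+1)) ℝ :=
  Matrix.of fun i j =>
    if (i : ℕ) = μ ∧ (j : ℕ) = ν then 1
    else if (i : ℕ) = ν ∧ (j : ℕ) = μ then -1 else 0

/-- The operator `♯F = η⁻¹ F` as a complex matrix acting on `ℂ^{n+1}`. -/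
def sharp {n : ℕ} (F : Matrix (Fin (n+1)) (Fin (n+1)) ℝ) :
    Matrix (Fin (n+1)) (Fin (n+1)) ℂ :=
  ((eta n)⁻¹ * F).map (Complex.ofReal)

/-- The bilinear form `η` extended complex-bilinearly to `ℂ^{n+1}`. -/
def etaC {n : ℕ} (v w : Fin (n+1) → ℂ) : ℂ :=
  ∑ i : Fin (n+1), (if (i : ℕ) = 0 then (-1 : ℂ) else 1) * v i * w i

/-- The bilinear form `η` on `ℝ^{n+1}`. -/
def etaR {n : ℕ} (v w : Fin (n+1) → ℝ) : ℝ :=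
  ∑ i : Fin (n+1), (if (i : ℕ) = 0 then (-1 : ℝ) else 1) * v i * w i

/-- `v` is an eigenvector of `M` with eigenvalue `lam`. -/
def IsEigenpair {n : ℕ} (M : Matrix (Fin (n+1)) (Fin (n+1)) ℂ) (lam : ℂ)
    (v : Fin (n+1) → ℂ) : Prop :=
  v ≠ 0 ∧ M.mulVec v = lam • v

/-- `lam` is an eigenvalue of the matrix `M`. -/
def HasEigenvalue' {n : ℕ} (M : Matrix (Fin (n+1)) (Fin (n+1)) ℂ) (lam : ℂ) : Prop :=
  ∃ v, IsEigenpair M lam v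

/-- `diag(1, R)`: block diagonal, identity on `x⁰`, `R` on `(x¹,…,xⁿ)`. -/
def blockOne {n : ℕ} (R : Matrix (Fin n) (Fin n) ℝ) :
    Matrix (Fin (n+1)) (Fin (n+1)) ℝ :=
  Matrix.reindex (finSumFinEquiv.trans (finCongr (Nat.add_comm 1 n)))
    (finSumFinEquiv.trans (finCongr (Nat.add_comm 1 n)))
    (Matrix.fromBlocks (1 : Matrix (Fin 1) (Fin 1) ℝ) 0 0 R)

lemma fsfe_zero {n : ℕ} (x : Fin (1+n)) (hx : (x:ℕ) = 0) :
    finSumFinEquiv.symm x = Sum.inl 0 := by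
  rw [Equiv.symm_apply_eq]; ext; simpa using hx

lemma fsfe_succ {n : ℕ} (j : Fin n) (h : n + 1 = 1 + n) :
    finSumFinEquiv.symm (Fin.cast h (Fin.succ j)) = Sum.inr j := by
  rw [Equiv.symm_apply_eq]; ext; simp [Nat.add_comm]

lemma blockOne_zero_zero {n : ℕ} (R : Matrix (Fin n) (Fin n) ℝ) : blockOne R 0 0 = 1 := by
  simp [blockOne, Matrix.reindex_apply, Matrix.submatrix_apply]
  rw [fsfe_zero _ (by simp)]
  simp

lemma blockOne_zero_succ {n : ℕ} (R : Matrix (Fin n) (Fin n) ℝ) (j : Fin n) :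
    blockOne R 0 (Fin.succ j) = 0 := by
  simp [blockOne, Matrix.reindex_apply, Matrix.submatrix_apply, fsfe_succ]
  rw [fsfe_zero _ (by simp)]
  simp

lemma blockOne_succ_zero {n : ℕ} (R : Matrix (Fin n) (Fin n) ℝ) (i : Fin n) :
    blockOne R (Fin.succ i) 0 = 0 := by
  simp [blockOne, Matrix.reindex_apply, Matrix.submatrix_apply, fsfe_succ]
  rw [fsfe_zero _ (by simp)]
  simp

lemma blockOne_succ_succ {n : ℕ} (R : Matrix (Fin n) (Fin n) ℝ) (i j : Fin n) :
    blockOne R (Fin.succ i) (Fin.succ j) = R i j := by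
  simp [blockOne, Matrix.reindex_apply, Matrix.submatrix_apply, fsfe_succ]

lemma blockOne_transpose {n : ℕ} (R : Matrix (Fin n) (Fin n) ℝ) :
    (blockOne R)ᵀ = blockOne Rᵀ := by
  ext i j
  induction i using Fin.cases <;> induction j using Fin.cases <;>
    simp [Matrix.transpose_apply, blockOne_zero_zero, blockOne_zero_succ,
      blockOne_succ_zero, blockOne_succ_succ]

lemma blockOne_mul {n : ℕ} (A B : Matrix (Fin n) (Fin n) ℝ) :
    blockOne (A * B) = blockOne A * blockOne B := by
  ext i j
  induction i using Fin.cases <;> induction j using Fin.cases <;>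
    simp [Matrix.mul_apply, Fin.sum_univ_succ, blockOne_zero_zero, blockOne_zero_succ,
      blockOne_succ_zero, blockOne_succ_succ]

lemma blockOne_one {n : ℕ} : blockOne (1 : Matrix (Fin n) (Fin n) ℝ) = 1 := by
  ext i j
  induction i using Fin.cases <;> induction j using Fin.cases <;>
    simp [Matrix.one_apply, blockOne_zero_zero, blockOne_zero_succ,
      blockOne_succ_zero, blockOne_succ_succ, Fin.succ_inj]
  · exact Ne.symm (Fin.succ_ne_zero _)

lemma vecMulVec_mul_vecMulVec {m : ℕ} (u : Fin m → ℝ) :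
    vecMulVec u u * vecMulVec u u = (u ⬝ᵥ u) • vecMulVec u u := by
  ext i j
  simp only [Matrix.mul_apply, vecMulVec_apply, Matrix.smul_apply, smul_eq_mul,
    dotProduct]
  rw [Finset.sum_mul]
  apply Finset.sum_congr rfl
  intro k _
  ring

lemma vecMulVec_mulVec' {m : ℕ} (u w : Fin m → ℝ) :
    (vecMulVec u u).mulVec w = (u ⬝ᵥ w) • u := by
  ext i
  simp only [Matrix.mulVec, vecMulVec_apply, dotProduct, Pi.smul_apply, smul_eq_mul,
    Finset.sum_mul]
  apply Finset.sum_congr rfl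
  intro k _
  ring

/-- Householder: every vector can be rotated (by an orthogonal matrix) onto the
first coordinate axis. -/
lemma householder (m : ℕ) (w : Fin (m+1) → ℝ) :
    ∃ (H : Matrix (Fin (m+1)) (Fin (m+1)) ℝ) (c : ℝ),
      Hᵀ * H = 1 ∧ H.mulVec w = c • (Pi.single 0 1 : Fin (m+1) → ℝ) := by
  set e₀ : Fin (m+1) → ℝ := Pi.single 0 1 with he
  set a : ℝ := Real.sqrt (w ⬝ᵥ w) with ha
  have hww : 0 ≤ w ⬝ᵥ w := Finset.sum_nonneg fun i _ => mul_self_nonneg _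
  have ha2 : a * a = w ⬝ᵥ w := Real.mul_self_sqrt hww
  by_cases hw : w = a • e₀
  · refine ⟨1, a, by simp, ?_⟩
    rw [Matrix.one_mulVec, hw, he]
  · set u : Fin (m+1) → ℝ := w - a • e₀ with hu
    have hu0 : u ≠ 0 := fun h => hw (sub_eq_zero.mp h)
    set d : ℝ := u ⬝ᵥ u with hd
    have hd0 : d ≠ 0 := fun h => hu0 (dotProduct_self_eq_zero.mp h)
    set c : ℝ := 2 / d with hc
    set M : Matrix (Fin (m+1)) (Fin (m+1)) ℝ := vecMulVec u u with hM
    set H : Matrix (Fin (m+1)) (Fin (m+1)) ℝ := 1 - c • M with hH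
    have hMM : M * M = d • M := by rw [hM, _root_.vecMulVec_mul_vecMulVec, ← hd]
    have hsymm : Hᵀ = H := by
      ext i j
      simp only [hH, hM, Matrix.transpose_apply, Matrix.sub_apply, Matrix.one_apply,
        Matrix.smul_apply, vecMulVec_apply, smul_eq_mul]
      rw [mul_comm (u j) (u i)]
      congr 1
      simp [eq_comm]
    have hcc : c * (c * d) = c + c := by rw [hc]; field_simp; ring
    have key : (c • M) * (c • M) = (c * (c * d)) • M := by
      rw [smul_mul_assoc, mul_smul_comm, hMM, smul_smul, smul_smul, mul_assoc]
    have horth : Hᵀ * H = 1 := by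
      rw [hsymm, hH, mul_sub, mul_one, sub_mul, one_mul, key, hcc, add_smul]
      abel
    have he0w : e₀ ⬝ᵥ w = w 0 := by simp [he, single_dotProduct]
    have hwe0 : w ⬝ᵥ e₀ = w 0 := by simp [he, dotProduct_single]
    have he0e0 : e₀ ⬝ᵥ e₀ = (1:ℝ) := by simp [he, single_dotProduct, Pi.single_apply]
    have huw : u ⬝ᵥ w = w ⬝ᵥ w - a * w 0 := by
      simp [hu, sub_dotProduct, smul_dotProduct, he0w, smul_eq_mul]
    have hdd : d = 2 * (u ⬝ᵥ w) := by
      rw [huw, hd, hu]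
      simp only [sub_dotProduct, dotProduct_sub, smul_dotProduct,
        dotProduct_smul, smul_eq_mul, he0w, hwe0, he0e0]
      linear_combination ha2
    refine ⟨H, a, horth, ?_⟩
    have hstep : H.mulVec w = w - (c * (u ⬝ᵥ w)) • u := by
      rw [hH, Matrix.sub_mulVec, Matrix.one_mulVec, Matrix.smul_mulVec, hM,
        vecMulVec_mulVec', smul_smul]
    have hx : u ⬝ᵥ w ≠ 0 := by
      intro h; exact hd0 (by rw [hdd, h, mul_zero])
    have h1 : c * (u ⬝ᵥ w) = 1 := by
      rw [hc, hdd]; field_simp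
    rw [hstep, h1, one_smul, hu, he, sub_sub_cancel]

lemma superdiag_apply (m : ℕ) (u : Fin m → ℝ) (i j : Fin (m+1)) :
    (∑ k : Fin m, u k • dx m (k:ℕ) ((k:ℕ)+1)) i j =
      if h : (j:ℕ) = (i:ℕ)+1 then u ⟨i, by omega⟩
      else if h' : (i:ℕ) = (j:ℕ)+1 then -u ⟨j, by omega⟩ else 0 := by
  rw [Matrix.sum_apply]
  simp only [Matrix.smul_apply, dx, Matrix.of_apply, smul_eq_mul]
  split_ifs with h h'
  · rw [Finset.sum_eq_single (⟨(i:ℕ), by omega⟩ : Fin m)]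
    · rw [if_pos ⟨rfl, by simp [h]⟩, mul_one]
    · intro b _ hb
      have hb' : (b:ℕ) ≠ (i:ℕ) := fun hh => hb (Fin.ext hh)
      rw [if_neg (by omega), if_neg (by omega), mul_zero]
    · intro hmem; exact absurd (Finset.mem_univ _) hmem
  · rw [Finset.sum_eq_single (⟨(j:ℕ), by omega⟩ : Fin m)]
    · rw [if_neg (by omega), if_pos ⟨by simp [h'], rfl⟩]; ring
    · intro b _ hb
      have hb' : (b:ℕ) ≠ (j:ℕ) := fun hh => hb (Fin.ext hh)
      rw [if_neg (by omega), if_neg (by omega), mul_zero]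
    · intro hmem; exact absurd (Finset.mem_univ _) hmem
  · apply Finset.sum_eq_zero
    intro b _
    rw [if_neg (by omega), if_neg (by omega), mul_zero]

section Conj
variable {m : ℕ} (S : Matrix (Fin m) (Fin m) ℝ) (M : Matrix (Fin (m+1)) (Fin (m+1)) ℝ)

lemma conj_zero_zero : ((blockOne S)ᵀ * M * blockOne S) 0 0 = M 0 0 := by
  simp [Matrix.mul_apply, Fin.sum_univ_succ, blockOne_zero_zero, blockOne_zero_succ,
    blockOne_succ_zero, blockOne_succ_succ, Finset.sum_mul, Finset.mul_sum]

lemma conj_zero_succ (j : Fin m) :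
    ((blockOne S)ᵀ * M * blockOne S) 0 (Fin.succ j) = ∑ l : Fin m, M 0 (Fin.succ l) * S l j := by
  simp [Matrix.mul_apply, Fin.sum_univ_succ, blockOne_zero_zero, blockOne_zero_succ,
    blockOne_succ_zero, blockOne_succ_succ, Finset.sum_mul, Finset.mul_sum]

lemma conj_succ_zero (i : Fin m) :
    ((blockOne S)ᵀ * M * blockOne S) (Fin.succ i) 0 = ∑ k : Fin m, S k i * M (Fin.succ k) 0 := by
  simp [Matrix.mul_apply, Fin.sum_univ_succ, blockOne_zero_zero, blockOne_zero_succ,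
    blockOne_succ_zero, blockOne_succ_succ, Finset.sum_mul, Finset.mul_sum]

lemma conj_succ_succ (i j : Fin m) :
    ((blockOne S)ᵀ * M * blockOne S) (Fin.succ i) (Fin.succ j) =
      (Sᵀ * (M.submatrix Fin.succ Fin.succ) * S) i j := by
  simp [Matrix.mul_apply, Fin.sum_univ_succ, blockOne_zero_zero, blockOne_zero_succ,
    blockOne_succ_zero, blockOne_succ_succ, Finset.sum_mul, Finset.mul_sum,
    Matrix.submatrix_apply]

end Conj

set_option maxHeartbeats 6000000 in
lemma aux : ∀ (n : ℕ) (F : Matrix (Fin (n+1)) (Fin (n+1)) ℝ), Fᵀ = -F →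
    ∃ (R : Matrix (Fin n) (Fin n) ℝ) (u : Fin n → ℝ), Rᵀ * R = 1 ∧
      (blockOne R)ᵀ * F * blockOne R = ∑ k : Fin n, u k • dx n (k:ℕ) ((k:ℕ)+1) := by
  intro n
  induction n with
  | zero =>
    intro F hF
    refine ⟨1, fun _ => 0, by simp, ?_⟩
    have hF0 : F = 0 := by
      ext i j
      have h1 := congrFun (congrFun hF i) j
      have hij : i = j := Fin.ext (by omega)
      subst hij
      simp only [Matrix.transpose_apply, Matrix.neg_apply] at h1
      simp only [Matrix.zero_apply]
      linarith
    rw [blockOne_one, hF0]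
    simp
  | succ n IH =>
    intro F hF
    obtain ⟨H, c, hH, hHw⟩ := householder n (fun l => F 0 (Fin.succ l))
    set R₁ := Hᵀ with hR₁
    set G := (blockOne R₁)ᵀ * F * blockOne R₁ with hG
    clear_value G
    have hGT : Gᵀ = -G := by
      rw [hG]
      simp only [Matrix.transpose_mul, Matrix.transpose_transpose, Matrix.mul_assoc, hF,
        Matrix.mul_neg, Matrix.neg_mul]
    have hG0succ : ∀ j : Fin (n+1), G 0 (Fin.succ j) = if j = 0 then c else 0 := by
      intro j
      rw [hG, conj_zero_succ]
      have h2 : ∑ l, F 0 (Fin.succ l) * R₁ l j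
          = H.mulVec (fun l => F 0 (Fin.succ l)) j := by
        simp [Matrix.mulVec, dotProduct, hR₁, Matrix.transpose_apply, mul_comm]
      rw [h2, hHw]
      by_cases hj : j = 0 <;> simp [hj, Pi.single_apply]
    set F' := G.submatrix Fin.succ Fin.succ with hF'
    clear_value F'
    have hF'T : F'ᵀ = -F' := by
      ext i j
      have := congrFun (congrFun hGT (Fin.succ i)) (Fin.succ j)
      simpa [Matrix.transpose_apply, Matrix.submatrix_apply, hF'] using this
    obtain ⟨R₂, u', hR₂, hconj₂⟩ := IH F' hF'T
    rw [hF'] at hconj₂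
    have hR₁o : R₁ᵀ * R₁ = 1 := by
      rw [hR₁, Matrix.transpose_transpose]; exact mul_eq_one_comm.mp hH
    refine ⟨R₁ * blockOne R₂,
      (fun k => if h : (k:ℕ) = 0 then c else u' ⟨(k:ℕ)-1, by omega⟩), ?_, ?_⟩
    · rw [Matrix.transpose_mul]
      calc (blockOne R₂)ᵀ * R₁ᵀ * (R₁ * blockOne R₂)
          = (blockOne R₂)ᵀ * (R₁ᵀ * R₁ * blockOne R₂) := by
            simp only [Matrix.mul_assoc]
        _ = (blockOne R₂)ᵀ * blockOne R₂ := by rw [hR₁o, Matrix.one_mul]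
        _ = 1 := by rw [blockOne_transpose, ← blockOne_mul, hR₂, blockOne_one]
    · rw [blockOne_mul]
      have key : (blockOne R₁ * blockOne (blockOne R₂))ᵀ * F * (blockOne R₁ * blockOne (blockOne R₂))
          = (blockOne (blockOne R₂))ᵀ * G * blockOne (blockOne R₂) := by
        rw [hG]; simp only [Matrix.transpose_mul, Matrix.mul_assoc]
      rw [key]
      ext i j
      rw [superdiag_apply]
      have hG00 : G 0 0 = 0 := by
        have := congrFun (congrFun hGT 0) 0
        simp only [Matrix.transpose_apply, Matrix.neg_apply] at this
        linarith
      have hGs0 : ∀ k : Fin (n+1), G (Fin.succ k) 0 = -(if k = 0 then c else 0) := by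
        intro k
        have := congrFun (congrFun hGT 0) (Fin.succ k)
        simp only [Matrix.transpose_apply, Matrix.neg_apply] at this
        rw [← hG0succ k]
        linarith
      rcases Fin.eq_zero_or_eq_succ i with rfl | ⟨i', rfl⟩
      · rcases Fin.eq_zero_or_eq_succ j with rfl | ⟨j', rfl⟩
        · rw [conj_zero_zero, hG00]
          simp
        · rw [conj_zero_succ]
          have hsum : ∑ l, G 0 (Fin.succ l) * blockOne R₂ l j' = c * blockOne R₂ 0 j' := by
            simp only [hG0succ, ite_mul, zero_mul]
            rw [Finset.sum_ite_eq' Finset.univ (0 : Fin (n+1)) (fun l => c * blockOne R₂ l j')]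
            simp
          rw [hsum]
          rcases Fin.eq_zero_or_eq_succ j' with rfl | ⟨j'', rfl⟩
          · rw [blockOne_zero_zero, mul_one]
            rw [dif_pos (by simp)]
            simp
          · rw [blockOne_zero_succ, mul_zero]
            rw [dif_neg (by simp), dif_neg (by simp)]
      · rcases Fin.eq_zero_or_eq_succ j with rfl | ⟨j', rfl⟩
        · rw [conj_succ_zero]
          have hsum : ∑ k, blockOne R₂ k i' * G (Fin.succ k) 0 = -(c * blockOne R₂ 0 i') := by
            simp only [hGs0, mul_ite, ite_mul, mul_neg, mul_zero]
            rw [Finset.sum_neg_distrib]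
            congr 1
            rw [Finset.sum_ite_eq' Finset.univ (0 : Fin (n+1)) (fun k => blockOne R₂ k i' * c)]
            simp [mul_comm]
          rw [hsum]
          rcases Fin.eq_zero_or_eq_succ i' with rfl | ⟨i'', rfl⟩
          · rw [blockOne_zero_zero, mul_one]
            rw [dif_neg (by simp), dif_pos (by simp)]
            simp
          · rw [blockOne_zero_succ, mul_zero]
            rw [dif_neg (by simp), dif_neg (by simp)]
            simp
        · rw [conj_succ_succ, hconj₂, superdiag_apply]
          by_cases h1 : (j':ℕ) = (i':ℕ)+1
          · rw [dif_pos h1, dif_pos (by simp [Fin.val_succ]; omega)]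
            rw [dif_neg (by simp)]
            congr 1
          · by_cases h2 : (i':ℕ) = (j':ℕ)+1
            · rw [dif_neg h1, dif_pos h2, dif_neg (by simp [Fin.val_succ]; omega),
                dif_pos (by simp [Fin.val_succ]; omega)]
              rw [dif_neg (by simp)]
              congr 2
            · rw [dif_neg h1, dif_neg h2, dif_neg (by simp [Fin.val_succ]; omega),
                dif_neg (by simp [Fin.val_succ]; omega)]


/-- Every real antisymmetric `(n+1)×(n+1)` matrix can be brought, by a rotation
`Λ = diag(1,R)` with `R ∈ SO(n)`, into superdiagonal form
`Σ_{k=0}^{n−1} u_k · dx^k dx^{k+1}`. -/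
theorem superdiagonal_form (n : ℕ) (F : Matrix (Fin (n+1)) (Fin (n+1)) ℝ)
    (hF : Fᵀ = -F) :
    ∃ (R : Matrix (Fin n) (Fin n) ℝ) (u : Fin n → ℝ),
      Rᵀ * R = 1 ∧ R.det = 1 ∧
      (blockOne R)ᵀ * F * (blockOne R) =
        ∑ k : Fin n, u k • dx n (k : ℕ) ((k : ℕ) + 1) := by
  obtain ⟨R, u, hR, hconj⟩ := aux n F hF
  have hdet2 : R.det * R.det = 1 := by
    have h := congrArg Matrix.det hR
    rwa [Matrix.det_mul, Matrix.det_transpose, Matrix.det_one] at h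
  rcases mul_self_eq_one_iff.mp hdet2 with hdet | hdet
  · exact ⟨R, u, hR, hdet, hconj⟩
  · cases n with
    | zero =>
      rw [Matrix.det_fin_zero] at hdet
      norm_num at hdet
    | succ m =>
      set E : Matrix (Fin (m+1)) (Fin (m+1)) ℝ :=
        Matrix.diagonal (fun i => if (i:ℕ) = m then -1 else 1) with hE
      have hEE : Eᵀ * E = 1 := by
        rw [hE, Matrix.diagonal_transpose, Matrix.diagonal_mul_diagonal]
        ext i j
        rcases eq_or_ne i j with rfl | hij
        · rw [Matrix.diagonal_apply_eq, Matrix.one_apply_eq]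
          by_cases h : (i:ℕ) = m <;> simp [h]
        · rw [Matrix.diagonal_apply_ne _ hij, Matrix.one_apply_ne hij]
      refine ⟨R * E, (fun k => if (k:ℕ) = m then -u k else u k), ?_, ?_, ?_⟩
      · calc (R*E)ᵀ * (R*E) = Eᵀ * (Rᵀ * R * E) := by
              rw [Matrix.transpose_mul]; simp only [Matrix.mul_assoc]
          _ = Eᵀ * E := by rw [hR, Matrix.one_mul]
          _ = 1 := hEE
      · rw [Matrix.det_mul, hdet, hE, Matrix.det_diagonal]
        have hprod : ∏ i : Fin (m+1), (if (i:ℕ) = m then (-1:ℝ) else 1) = -1 := by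
          rw [Fin.prod_univ_castSucc]
          have h1 : ∀ i : Fin m, (if ((Fin.castSucc i :Fin (m+1)):ℕ) = m then (-1:ℝ) else 1) = 1 := by
            intro i; rw [if_neg]; simp [Fin.castSucc]; omega
          rw [Finset.prod_congr rfl (fun i _ => h1 i)]
          simp [Fin.last]
        rw [hprod]; norm_num
      · rw [blockOne_mul]
        have key : (blockOne R * blockOne E)ᵀ * F * (blockOne R * blockOne E)
            = (blockOne E)ᵀ * ((blockOne R)ᵀ * F * blockOne R) * blockOne E := by
          simp only [Matrix.transpose_mul, Matrix.mul_assoc]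
        rw [key, hconj]
        have hbe : blockOne E
            = Matrix.diagonal (fun i : Fin (m+2) => if (i:ℕ) = m+1 then -1 else 1) := by
          ext i j
          rcases Fin.eq_zero_or_eq_succ i with rfl | ⟨i', rfl⟩ <;>
            rcases Fin.eq_zero_or_eq_succ j with rfl | ⟨j', rfl⟩
          · rw [blockOne_zero_zero, Matrix.diagonal_apply_eq]
            rw [if_neg (by simp)]
          · rw [blockOne_zero_succ, Matrix.diagonal_apply_ne _ (by exact (Fin.succ_ne_zero j').symm)]
          · rw [blockOne_succ_zero, Matrix.diagonal_apply_ne _ (by exact Fin.succ_ne_zero i')]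
          · rw [blockOne_succ_succ, hE]
            by_cases hij : i' = j'
            · subst hij
              rw [Matrix.diagonal_apply_eq, Matrix.diagonal_apply_eq]
              simp only [Fin.val_succ]
              split_ifs <;> first | rfl | omega
            · rw [Matrix.diagonal_apply_ne _ hij,
                Matrix.diagonal_apply_ne _ (by simpa [Fin.succ_inj] using hij)]
        rw [hbe, Matrix.diagonal_transpose]
        ext i j
        rw [Matrix.mul_diagonal, Matrix.diagonal_mul, superdiag_apply, superdiag_apply]
        by_cases h1 : (j:ℕ) = (i:ℕ)+1
        · rw [dif_pos h1, dif_pos h1]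
          have hi : (i:ℕ) ≠ m+1 := by omega
          rw [if_neg hi]
          by_cases h2 : (i:ℕ) = m
          · rw [if_pos (by omega), if_pos h2]
            ring
          · rw [if_neg (by omega), if_neg h2]
            ring
        · rw [dif_neg h1, dif_neg h1]
          by_cases h2 : (i:ℕ) = (j:ℕ)+1
          · rw [dif_pos h2, dif_pos h2]
            have hj : (j:ℕ) ≠ m+1 := by omega
            rw [if_neg hj]
            by_cases h3 : (j:ℕ) = m
            · rw [if_pos (by omega), if_pos h3]
              ring
            · rw [if_neg (by omega), if_neg h3]
              ring
          · rw [dif_neg h2, dif_neg h2]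
            ring
end
end

section
/- Every eigenvalue λ ∈ ℂ of the operator ♯F associated to a constant 2-form F on Minkowski space ℝ^{n,1} is real or pure imaginary: Im λ = 0 or Re λ = 0. -/
open Matrix BigOperators

noncomputable section

lemma eta_mul_eta (n : ℕ) : eta n * eta n = 1 := by
  have h : (fun i : Fin (n+1) => (if (i:ℕ) = 0 then (-1:ℝ) else 1) * (if (i:ℕ) = 0 then (-1:ℝ) else 1)) = fun _ => 1 := by
    funext i; split_ifs <;> norm_num
  rw [eta, Matrix.diagonal_mul_diagonal, h, Matrix.diagonal_one]

lemma inv_eta (n : ℕ) : (eta n)⁻¹ = eta n := Matrix.inv_eq_right_inv (eta_mul_eta n)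

lemma sharp_apply {n : ℕ} (F : Matrix (Fin (n+1)) (Fin (n+1)) ℝ) (i j : Fin (n+1)) :
    sharp F i j = (if (i:ℕ) = 0 then (-1:ℂ) else 1) * (F i j : ℂ) := by
  rw [sharp, inv_eta, eta]
  simp [Matrix.map_apply, Matrix.diagonal_mul]
  split_ifs <;> simp

lemma pairing {n : ℕ} (F : Matrix (Fin (n+1)) (Fin (n+1)) ℝ) (hF : Fᵀ = -F)
    (v w : Fin (n+1) → ℂ) :
    etaC ((sharp F).mulVec v) w = - etaC v ((sharp F).mulVec w) := by
  have hF0 : ∀ i j, F i j = - F j i := fun i j => by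
    have := congrFun (congrFun hF j) i
    simpa [Matrix.transpose_apply] using this
  have hF' : ∀ i j, (F i j : ℂ) = - (F j i : ℂ) := fun i j => by
    exact_mod_cast congrArg Complex.ofReal (hF0 i j)
  have L : etaC ((sharp F).mulVec v) w = ∑ i, ∑ j, (F i j : ℂ) * v j * w i := by
    unfold etaC Matrix.mulVec dotProduct
    simp only [Finset.mul_sum, Finset.sum_mul]
    congr 1; funext i; congr 1; funext j
    rw [sharp_apply]
    split_ifs <;> ring
  have R : etaC v ((sharp F).mulVec w) = ∑ i, ∑ j, (F i j : ℂ) * v i * w j := by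
    unfold etaC Matrix.mulVec dotProduct
    simp only [Finset.mul_sum, Finset.sum_mul]
    congr 1; funext i; congr 1; funext j
    rw [sharp_apply]
    split_ifs <;> ring
  rw [L, R, ← Finset.sum_neg_distrib, Finset.sum_comm]
  congr 1; funext i
  rw [← Finset.sum_neg_distrib]
  congr 1; funext j
  rw [hF' i j]; ring

lemma etaC_smul_left {n : ℕ} (c : ℂ) (v w : Fin (n+1) → ℂ) :
    etaC (c • v) w = c * etaC v w := by
  unfold etaC
  rw [Finset.mul_sum]
  congr 1; funext i
  simp [Pi.smul_apply, smul_eq_mul]; ring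

lemma etaC_smul_right {n : ℕ} (c : ℂ) (v w : Fin (n+1) → ℂ) :
    etaC v (c • w) = c * etaC v w := by
  unfold etaC
  rw [Finset.mul_sum]
  congr 1; funext i
  simp [Pi.smul_apply, smul_eq_mul]; ring

lemma mulVec_conj {n : ℕ} (F : Matrix (Fin (n+1)) (Fin (n+1)) ℝ) (v : Fin (n+1) → ℂ) :
    (sharp F).mulVec (fun i => starRingEnd ℂ (v i)) =
      fun i => starRingEnd ℂ ((sharp F).mulVec v i) := by
  funext i
  show ∑ j, sharp F i j * (starRingEnd ℂ) (v j) = (starRingEnd ℂ) (∑ j, sharp F i j * v j)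
  rw [map_sum]
  congr 1; funext j
  rw [sharp_apply, _root_.map_mul, _root_.map_mul, Complex.conj_ofReal]
  congr 1
  congr 1
  split_ifs <;> simp

lemma etaC_re {n : ℕ} (v w : Fin (n+1) → ℂ) :
    (etaC v w).re = etaR (fun i => (v i).re) (fun i => (w i).re)
      - etaR (fun i => (v i).im) (fun i => (w i).im) := by
  unfold etaC etaR
  rw [Complex.re_sum, ← Finset.sum_sub_distrib]
  congr 1; funext i
  split_ifs <;> simp [Complex.mul_re, Complex.mul_im] <;> ring

lemma etaC_im {n : ℕ} (v w : Fin (n+1) → ℂ) :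
    (etaC v w).im = etaR (fun i => (v i).re) (fun i => (w i).im)
      + etaR (fun i => (v i).im) (fun i => (w i).re) := by
  unfold etaC etaR
  rw [Complex.im_sum, ← Finset.sum_add_distrib]
  congr 1; funext i
  split_ifs <;> simp [Complex.mul_re, Complex.mul_im] <;> ring

lemma sum_mul_eq {n : ℕ} (a b : Fin (n+1) → ℝ) :
    ∑ i, a i * b i = etaR a b + 2 * (a 0 * b 0) := by
  have h : ∑ i, a i * b i - etaR a b = ∑ i, (a i * b i - (if (i:ℕ) = 0 then (-1:ℝ) else 1) * a i * b i) := by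
    rw [Finset.sum_sub_distrib]; rfl
  have h2 : ∑ i, (a i * b i - (if (i:ℕ) = 0 then (-1:ℝ) else 1) * a i * b i) = 2 * (a 0 * b 0) := by
    rw [Finset.sum_eq_single_of_mem (0 : Fin (n+1)) (Finset.mem_univ _)]
    · simp; ring
    · intro i _ hi
      have : (i:ℕ) ≠ 0 := fun hv => hi (Fin.ext hv)
      simp [this]
  linarith [h, h2, h ▸ h2]

lemma null_dep {n : ℕ} (a b : Fin (n+1) → ℝ)
    (haa : etaR a a = 0) (hbb : etaR b b = 0) (hab : etaR a b = 0) :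
    ∀ i, b 0 * a i = a 0 * b i := by
  have key : ∑ i, (b 0 * a i - a 0 * b i)^2 = 0 := by
    have e1 : ∑ i, (b 0 * a i - a 0 * b i)^2
        = (b 0)^2 * (∑ i, a i * a i) - 2 * (a 0 * b 0) * (∑ i, a i * b i)
          + (a 0)^2 * (∑ i, b i * b i) := by
      rw [Finset.mul_sum, Finset.mul_sum, Finset.mul_sum, ← Finset.sum_sub_distrib,
        ← Finset.sum_add_distrib]
      congr 1; funext i; ring
    rw [e1, sum_mul_eq a a, sum_mul_eq a b, sum_mul_eq b b, haa, hbb, hab]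
    ring
  intro i
  have := (Finset.sum_eq_zero_iff_of_nonneg (fun i _ => sq_nonneg (b 0 * a i - a 0 * b i))).mp key i (Finset.mem_univ i)
  have := pow_eq_zero_iff (n := 2) (by norm_num) |>.mp this
  linarith [sub_eq_zero.mp this]

lemma etaR_comm {n : ℕ} (a b : Fin (n+1) → ℝ) : etaR a b = etaR b a := by
  unfold etaR; congr 1; funext i; ring

lemma etaR_neg_right {n : ℕ} (a b : Fin (n+1) → ℝ) :
    etaR a (fun i => -(b i)) = - etaR a b := by
  unfold etaR; rw [← Finset.sum_neg_distrib]; congr 1; funext i; ring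

/-- Every eigenvalue of `♯F` is real or pure imaginary. -/
theorem eigenvalue_real_or_pure_imaginary (n : ℕ)
    (F : Matrix (Fin (n+1)) (Fin (n+1)) ℝ) (hF : Fᵀ = -F)
    (lam : ℂ) (h : HasEigenvalue' (sharp F) lam) :
    lam.im = 0 ∨ lam.re = 0 := by
  by_contra hcon
  push_neg at hcon
  obtain ⟨him, hre⟩ := hcon
  obtain ⟨v, hv0, hvA⟩ := h
  set lc := starRingEnd ℂ lam with hlc
  have hlam_ne : (2 : ℂ) * lam ≠ 0 := by
    intro hz
    rcases mul_eq_zero.mp hz with h1 | h1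
    · norm_num at h1
    · exact hre (by rw [h1]; rfl)
  have hsum_ne : lam + lc ≠ 0 := by
    intro hz
    apply hre
    have := congrArg Complex.re hz
    simp [hlc, Complex.add_re, Complex.conj_re] at this
    linarith
  -- etaC v v = 0
  have hvv : etaC v v = 0 := by
    have p := pairing F hF v v
    rw [hvA, etaC_smul_left, etaC_smul_right] at p
    have h2 : (2 : ℂ) * lam * etaC v v = 0 := by linear_combination p
    rcases mul_eq_zero.mp h2 with h1 | h1
    · exact absurd h1 hlam_ne
    · exact h1
  -- conjugate eigenvector
  set vb : Fin (n+1) → ℂ := fun i => starRingEnd ℂ (v i) with hvbdef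
  have hvbA : (sharp F).mulVec vb = lc • vb := by
    rw [hvbdef, mulVec_conj F v]
    funext i
    rw [hvA]
    simp [Pi.smul_apply, smul_eq_mul, _root_.map_mul, hlc]
  have hvvb : etaC v vb = 0 := by
    have p := pairing F hF v vb
    rw [hvA, hvbA, etaC_smul_left, etaC_smul_right] at p
    have h2 : (lam + lc) * etaC v vb = 0 := by linear_combination p
    rcases mul_eq_zero.mp h2 with h1 | h1
    · exact absurd h1 hsum_ne
    · exact h1
  -- real and imaginary parts
  set a : Fin (n+1) → ℝ := fun i => (v i).re with hadef
  set b : Fin (n+1) → ℝ := fun i => (v i).im with hbdef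
  have hvb_re : (fun i => (vb i).re) = a := by funext i; simp [hvbdef, hadef]
  have hvb_im : (fun i => (vb i).im) = fun i => -(b i) := by funext i; simp [hvbdef, hbdef]
  have h1 : etaR a a - etaR b b = 0 := by
    have := congrArg Complex.re hvv
    rw [etaC_re] at this
    simpa using this
  have h2 : etaR a b + etaR b a = 0 := by
    have := congrArg Complex.im hvv
    rw [etaC_im] at this
    simpa using this
  have h3 : etaR a a + etaR b b = 0 := by
    have := congrArg Complex.re hvvb
    rw [etaC_re, hvb_re, hvb_im, etaR_neg_right] at this
    simpa using this
  have haa : etaR a a = 0 := by linarith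
  have hbb : etaR b b = 0 := by linarith
  have hab : etaR a b = 0 := by
    have := etaR_comm a b
    linarith
  have hdep := null_dep a b haa hbb hab
  -- final step: rule out real-direction eigenvectors
  have final : ∀ (w : Fin (n+1) → ℝ) (μ : ℂ), μ ≠ 0 →
      (∀ i, v i = μ * (w i : ℂ)) → False := by
    intro w μ hμ hvw
    set wC : Fin (n+1) → ℂ := fun i => (w i : ℂ) with hwC
    have hv_eq : v = μ • wC := funext fun i => by rw [hvw i]; rfl
    have hw0 : wC ≠ 0 := by
      intro hz
      apply hv0
      rw [hv_eq, hz, smul_zero]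
    have hAw : (sharp F).mulVec wC = lam • wC := by
      have h4 := hvA
      rw [hv_eq, Matrix.mulVec_smul] at h4
      funext i
      have h5 := congrFun h4 i
      simp only [Pi.smul_apply, smul_eq_mul] at h5 ⊢
      have h6 : μ * ((sharp F).mulVec wC i) = μ * (lam * wC i) := by
        rw [h5]; ring
      exact mul_left_cancel₀ hμ h6
    have hAwc : (sharp F).mulVec wC = lc • wC := by
      have h7 := mulVec_conj F wC
      have h8 : (fun i => starRingEnd ℂ (wC i)) = wC := by
        funext i; simp [hwC, Complex.conj_ofReal]
      rw [h8] at h7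
      rw [h7, hAw]
      funext i
      simp [Pi.smul_apply, smul_eq_mul, _root_.map_mul, hwC, Complex.conj_ofReal, hlc]
    have h9 : ∃ i, wC i ≠ 0 := by
      by_contra hz
      push_neg at hz
      exact hw0 (funext hz)
    obtain ⟨i, hi⟩ := h9
    have h10 : lam * wC i = lc * wC i := by
      have := congrFun (hAw.symm.trans hAwc) i
      simpa [Pi.smul_apply, smul_eq_mul] using this
    have h11 : lam = lc := mul_right_cancel₀ hi h10
    apply him
    have := congrArg Complex.im h11
    simp [hlc, Complex.conj_im] at this
    linarith
  by_cases hb0 : b 0 = 0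
  · -- then a 0 * b i = 0 for all i
    by_cases ha0 : a 0 = 0
    · -- a = 0 and b = 0, so v = 0
      have hsa : ∑ i, a i * a i = 0 := by
        rw [sum_mul_eq, haa, ha0]; ring
      have hsb : ∑ i, b i * b i = 0 := by
        rw [sum_mul_eq, hbb, hb0]; ring
      apply hv0
      funext i
      have hai := (Finset.sum_eq_zero_iff_of_nonneg
        (fun i _ => mul_self_nonneg (a i))).mp hsa i (Finset.mem_univ i)
      have hbi := (Finset.sum_eq_zero_iff_of_nonneg
        (fun i _ => mul_self_nonneg (b i))).mp hsb i (Finset.mem_univ i)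
      have hai' : a i = 0 := by nlinarith [mul_self_nonneg (a i)]
      have hbi' : b i = 0 := by nlinarith [mul_self_nonneg (b i)]
      apply Complex.ext
      · simpa [hadef] using hai'
      · simpa [hbdef] using hbi'
    · -- b i = 0 for all i; v = a real
      refine final a 1 one_ne_zero fun i => ?_
      have hbi : b i = 0 := by
        have := hdep i
        rw [hb0] at this
        have h12 : a 0 * b i = 0 := by linarith
        rcases mul_eq_zero.mp h12 with h13 | h13
        · exact absurd h13 ha0
        · exact h13
      apply Complex.ext
      · simp [hadef]
      · simp [hbdef] at hbi ⊢
        exact hbi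
  · -- b 0 ≠ 0: a i = (a 0 / b 0) * b i
    refine final b ((a 0 / b 0 : ℝ) + Complex.I) (by
      intro hz
      have := congrArg Complex.im hz
      simp at this) fun i => ?_
    have hai : a i = (a 0 / b 0) * b i := by
      field_simp
      linarith [hdep i]
    apply Complex.ext
    · simp [Complex.add_re, Complex.mul_re, hadef]
      simpa [hadef] using hai
    · simp [Complex.add_im, Complex.mul_im, hbdef]
end
end
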